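/- A set A computes a fixed point free function if and only if A computes a function f such that φ_{f(e)} ≠ φ_e for every e. -/

import Mathlib

open Nat.Partrec (Code)

/-- The `e`-th partial computable function, via the standard numbering of codes. -/
def phi (e : ℕ) : ℕ →. ℕ := (Denumerable.ofNat Code e).eval

/-- `W e` is the domain of the `e`-th partial computable function. -/
def W (e : ℕ) : Set ℕ := {n | (phi e n).Dom}

/-- The halting set ∅'. -/
def K0 : Set ℕ := {e | (phi e e).Dom}

/-- Characteristic function of a set of naturals. -/
noncomputable def chi (A : Set ℕ) : ℕ → ℕ := A.indicator 1

/-- Partial recursiveness relative to an oracle `O : ℕ → ℕ`. -/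
inductive OracleRecursiveIn (O : ℕ → ℕ) : (ℕ →. ℕ) → Prop
  | zero : OracleRecursiveIn O (pure 0)
  | succ : OracleRecursiveIn O Nat.succ
  | left : OracleRecursiveIn O fun n => (Nat.unpair n).1
  | right : OracleRecursiveIn O fun n => (Nat.unpair n).2
  | oracle : OracleRecursiveIn O fun n => Part.some (O n)
  | pair {f g} : OracleRecursiveIn O f → OracleRecursiveIn O g →
      OracleRecursiveIn O fun n => Nat.pair <$> f n <*> g n
  | comp {f g} : OracleRecursiveIn O f → OracleRecursiveIn O g →
      OracleRecursiveIn O fun n => g n >>= f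
  | prec {f g} : OracleRecursiveIn O f → OracleRecursiveIn O g →
      OracleRecursiveIn O (Nat.unpaired fun a n =>
        n.rec (f a) fun y IH => do
          let i ← IH
          g (Nat.pair a (Nat.pair y i)))
  | rfind {f} : OracleRecursiveIn O f →
      OracleRecursiveIn O fun a =>
        Nat.rfind fun n => (fun m => m = 0) <$> f (Nat.pair a n)

/-- A total function `f` is Turing reducible to the set `A`. -/
def FuncRecIn (A : Set ℕ) (f : ℕ → ℕ) : Prop :=
  OracleRecursiveIn (chi A) fun n => Part.some (f n)

/-- A binary total function `h` is Turing reducible to the set `A`. -/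
def Func2RecIn (A : Set ℕ) (h : ℕ → ℕ → ℕ) : Prop :=
  OracleRecursiveIn (chi A) fun n => Part.some (h (Nat.unpair n).1 (Nat.unpair n).2)

/-- Turing reducibility between sets of naturals. -/
def SetRecIn (A B : Set ℕ) : Prop := OracleRecursiveIn (chi B) fun n => Part.some (chi A n)

/-- `A` is computably enumerable. -/
def CE (A : Set ℕ) : Prop := REPred (· ∈ A)

/-- Codes for oracle machines. -/
inductive OCode : Type
  | zero | succ | left | right | oracle
  | pair (cf cg : OCode)
  | comp (cf cg : OCode)
  | prec (cf cg : OCode)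
  | rfind' (cf : OCode)

/-- Evaluation of oracle codes relative to an oracle `O`. -/
def OCode.evalo (O : ℕ → ℕ) : OCode → ℕ →. ℕ
  | .zero => pure 0
  | .succ => Nat.succ
  | .left => fun n => Part.some (Nat.unpair n).1
  | .right => fun n => Part.some (Nat.unpair n).2
  | .oracle => fun n => Part.some (O n)
  | .pair cf cg => fun n => Nat.pair <$> evalo O cf n <*> evalo O cg n
  | .comp cf cg => fun n => evalo O cg n >>= evalo O cf
  | .prec cf cg => Nat.unpaired fun a n =>
      n.rec (evalo O cf a) fun y IH => do
        let i ← IH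
        evalo O cg (Nat.pair a (Nat.pair y i))
  | .rfind' cf => Nat.unpaired fun a m =>
      (Nat.rfind fun n => (fun x => x = 0) <$> evalo O cf (Nat.pair a (n + m))).map (· + m)

/-- A standard numbering of oracle codes. -/
def OCode.ofNat : ℕ → OCode
  | 0 => .zero
  | 1 => .succ
  | 2 => .left
  | 3 => .right
  | 4 => .oracle
  | n + 5 =>
    let m := n.div2.div2
    have hm : m < n + 5 := by
      simp only [m, Nat.div2_val]
      exact lt_of_le_of_lt (le_trans (Nat.div_le_self _ _) (Nat.div_le_self _ _))
        (by omega)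
    have _m1 : m.unpair.1 < n + 5 := lt_of_le_of_lt m.unpair_left_le hm
    have _m2 : m.unpair.2 < n + 5 := lt_of_le_of_lt m.unpair_right_le hm
    match n.bodd, n.div2.bodd with
    | false, false => .pair (ofNat m.unpair.1) (ofNat m.unpair.2)
    | false, true  => .comp (ofNat m.unpair.1) (ofNat m.unpair.2)
    | true , false => .prec (ofNat m.unpair.1) (ofNat m.unpair.2)
    | true , true  => .rfind' (ofNat m)
decreasing_by
  all_goals first
    | exact _m1 | exact _m2 | exact hm
    | exact Nat.le_of_lt_succ _m1 | exact Nat.le_of_lt_succ _m2 | exact Nat.le_of_lt_succ hm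

/-- The Turing jump of an oracle `O : ℕ → ℕ`. -/
def jump (O : ℕ → ℕ) : Set ℕ := {e | (OCode.evalo O (OCode.ofNat e) e).Dom}

/-- A binary partial function `δ` is FPF⁺. -/
def FPFplus (δ : ℕ → ℕ →. ℕ) : Prop :=
  ∀ g : ℕ → ℕ, Computable g → ∃ n, ∀ a ∈ δ n (g n), phi (g n) ≠ phi a

/-!
Let `β j` be an index whose domain is the coded graph `{⟨x, m⟩ | φ_j(x) = m}`, and let `α e` be an
index of the partial function obtained by reading `W_e` as a coded graph. Both are computable by
the s-m-n theorem. If `f` satisfies `φ_{f e} ≠ φ_e`, then `e ↦ β (f (α e))` is fixed point free: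
`W_{β (f (α e))} = W_e` would make `W_e` the graph of `φ_{f (α e)}`, whence `φ_{α e} = φ_{f (α e)}`.
The converse holds because equal functions have equal domains.
-/

open Nat.Partrec.Code

lemma OracleRecursiveIn.of_partrec {O : ℕ → ℕ} {p : ℕ →. ℕ} (h : Nat.Partrec p) :
    OracleRecursiveIn O p := by
  induction h with
  | zero => exact .zero
  | succ => exact .succ
  | left => exact .left
  | right => exact .right
  | pair _ _ ihf ihg => exact .pair ihf ihg
  | comp _ _ ihf ihg => exact .comp ihf ihg
  | prec _ _ ihf ihg => exact .prec ihf ihg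
  | rfind _ ih => exact .rfind ih

namespace FuncRecIn

variable {A : Set ℕ} {f g : ℕ → ℕ}

lemma of_computable (hf : Computable f) : FuncRecIn A f :=
  .of_partrec (Partrec.nat_iff.mp hf)

lemma comp (hg : FuncRecIn A g) (hf : FuncRecIn A f) : FuncRecIn A fun n => g (f n) := by
  unfold FuncRecIn at *
  simpa only [Part.bind_eq_bind, Part.bind_some] using OracleRecursiveIn.comp hg hf

end FuncRecIn

lemma partrec₂_phi : Partrec₂ phi :=
  eval_part.comp ((Computable.ofNat Code).comp .fst) .snd

lemma Partrec₂.exists_computable_phi_eq {F : ℕ → ℕ →. ℕ} (hF : Partrec₂ F) :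
    ∃ s : ℕ → ℕ, Computable s ∧ ∀ a, phi (s a) = F a := by
  obtain ⟨c, hc⟩ := exists_code.mp (Partrec₂.unpaired'.mpr hF)
  refine ⟨fun a => Encodable.encode (c.curry a),
    (Primrec.encode.comp (primrec₂_curry.comp (.const c) .id)).to_comp, fun a => ?_⟩
  funext x
  simp [phi, eval_curry, hc]

lemma Nat.rfind_const_dom {b : Bool} : (Nat.rfind fun _ => Part.some b).Dom ↔ b = true := by
  refine ⟨fun h => ?_, fun h => Nat.rfind_dom.mpr ⟨0, by simp [h], fun h0 => absurd h0 (by omega)⟩⟩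
  simpa using Nat.rfind_spec (Part.get_mem h)

def codedGraph (g : ℕ →. ℕ) : Set ℕ := {p | p.unpair.2 ∈ g p.unpair.1}

lemma exists_computable_W_eq_codedGraph :
    ∃ β : ℕ → ℕ, Computable β ∧ ∀ j, W (β j) = codedGraph (phi j) := by
  let F : ℕ → ℕ →. ℕ := fun j p =>
    (phi j p.unpair.1).bind fun v => Nat.rfind fun _ => Part.some (decide (v = p.unpair.2))
  have htest : Partrec₂ fun (q : (ℕ × ℕ) × ℕ) (_ : ℕ) =>
      Part.some (decide (q.2 = q.1.2.unpair.2)) :=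
    Computable₂.partrec₂ <| Primrec₂.to_comp <| Primrec.to₂ <|
      Primrec.eq.decide.comp (Primrec.snd.comp Primrec.fst)
        (Primrec.snd.comp (Primrec.unpair.comp (Primrec.snd.comp (Primrec.fst.comp Primrec.fst))))
  have hF : Partrec₂ F :=
    (partrec₂_phi.comp .fst (Computable.fst.comp (Computable.unpair.comp .snd))).bind
      (Partrec.rfind htest)
  obtain ⟨β, hβ, hβF⟩ := hF.exists_computable_phi_eq
  refine ⟨β, hβ, fun j => ?_⟩
  ext p
  simp [W, codedGraph, hβF, F, Nat.rfind_const_dom, Part.mem_eq]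

lemma exists_computable_phi_eq_of_W_eq_codedGraph :
    ∃ α : ℕ → ℕ, Computable α ∧ ∀ e (g : ℕ →. ℕ), W e = codedGraph g → phi (α e) = g := by
  -- search for a stage `s` and a value `m` such that `⟨x, m⟩` enters `W e` by stage `s`
  let F : ℕ → ℕ →. ℕ := fun e x => Nat.rfindOpt fun k =>
    (evaln k.unpair.2 (Denumerable.ofNat Code e) (Nat.pair x k.unpair.1)).map fun _ => k.unpair.1
  have hstage : Primrec fun r : (ℕ × ℕ) × ℕ =>
      evaln r.2.unpair.2 (Denumerable.ofNat Code r.1.1) (Nat.pair r.1.2 r.2.unpair.1) :=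
    primrec_evaln.comp <|
      ((Primrec.snd.comp (Primrec.unpair.comp .snd)).pair
        ((Primrec.ofNat Code).comp (Primrec.fst.comp .fst))).pair
      (Primrec₂.natPair.comp (Primrec.snd.comp .fst) (Primrec.fst.comp (Primrec.unpair.comp .snd)))
  have hF : Partrec₂ F := Partrec.rfindOpt <| Primrec₂.to_comp <|
    hstage.option_map (Primrec.fst.comp (Primrec.unpair.comp (Primrec.snd.comp .fst))).to₂
  obtain ⟨α, hα, hαF⟩ := hF.exists_computable_phi_eq
  refine ⟨α, hα, fun e g hW => funext fun x => ?_⟩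
  have hmem : ∀ m ∈ F e x, m ∈ g x := by
    intro m hm
    obtain ⟨k, hk⟩ := Nat.rfindOpt_spec hm
    obtain ⟨v, hv, rfl⟩ := Option.mem_map.mp hk
    have : Nat.pair x k.unpair.1 ∈ W e := Part.dom_iff_mem.mpr ⟨v, evaln_sound hv⟩
    simpa [hW, codedGraph] using this
  have hdom : (g x).Dom → (F e x).Dom := by
    intro hg
    have : Nat.pair x ((g x).get hg) ∈ W e := by simp [hW, codedGraph, Part.get_mem]
    obtain ⟨v, hv⟩ := Part.dom_iff_mem.mp this
    obtain ⟨s, hs⟩ := evaln_complete.mp hv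
    exact Nat.rfindOpt_dom.mpr ⟨Nat.pair ((g x).get hg) s, (g x).get hg, by simpa using ⟨v, hs⟩⟩
  rw [hαF]
  exact Part.ext' ⟨fun h => Part.dom_iff_mem.mpr ⟨_, hmem _ (Part.get_mem h)⟩, hdom⟩
    fun h _ => Part.mem_unique (hmem _ (Part.get_mem h)) (Part.get_mem _)

/-- A set computes an FPF function iff it computes `f` with `φ_{f e} ≠ φ_e` for all `e`. -/
theorem fpf_iff_phi_diff (A : Set ℕ) :
    (∃ f : ℕ → ℕ, FuncRecIn A f ∧ ∀ n, W (f n) ≠ W n) ↔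
    (∃ f : ℕ → ℕ, FuncRecIn A f ∧ ∀ e, phi (f e) ≠ phi e) := by
  constructor
  · rintro ⟨f, hfA, hf⟩
    exact ⟨f, hfA, fun e h => hf e (by simp only [W, h])⟩
  · rintro ⟨f, hfA, hf⟩
    obtain ⟨α, hα, hαW⟩ := exists_computable_phi_eq_of_W_eq_codedGraph
    obtain ⟨β, hβ, hβW⟩ := exists_computable_W_eq_codedGraph
    refine ⟨fun e => β (f (α e)),
      (FuncRecIn.of_computable hβ).comp (hfA.comp (.of_computable hα)), fun e hW => ?_⟩
    exact hf (α e) (hαW e _ (hW.symm.trans (hβW _))).symm
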